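/- arXiv:2306.04483 — 3 statements merged into one kernel-verified Lean document; each statement's English description precedes it below -/
import Mathlib

section
/- Let d ≥ 1 and let φ ∈ Φ_d have a nonincreasing d-radial spectral density f_d. Let a₁ ≥ a₂ > 0 and b₁, b₂ ≥ 0 be constants satisfying b₁ ≥ b₂ (a₁/a₂)^{d/2}. Then for every vector η ∈ ℝ^d, the function h ↦ b₁ φ(√a₁ ‖h‖) − (b₂/2) [ φ(√a₂ ‖h − η‖) + φ(√a₂ ‖h + η‖) ] is a stationary covariance function on ℝ^d. -/
/-!
The scaled function `t ↦ φ (c t)` has radial spectral density `c⁻ᵈ f (u / c)`, and the symmetric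
average of the shifts by `±η` multiplies a spectral density by `cos ⟪η, ξ⟫`. Hence the function
in question is the cosine transform of
`g ξ = b₁ a₁^(-d/2) f (‖ξ‖ / √a₁) - b₂ a₂^(-d/2) cos ⟪η, ξ⟫ f (‖ξ‖ / √a₂)`,
and a cosine transform of an integrable `g ≥ 0` is positive semidefinite because
`∑ᵢⱼ vᵢ vⱼ cos ⟪xᵢ - xⱼ, ξ⟫ = |∑ᵢ vᵢ exp (i ⟪xᵢ, ξ⟫)|² ≥ 0`.
Finally `g ≥ 0`: `cos ≤ 1`, `f (‖ξ‖ / √a₂) ≤ f (‖ξ‖ / √a₁)` by monotonicity, and the condition on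
`b₁, b₂` says exactly `b₂ a₂^(-d/2) ≤ b₁ a₁^(-d/2)`.
-/

open MeasureTheory
open scoped BigOperators RealInnerProductSpace

noncomputable section

/-- A function `C : ℝ^d → ℝ` is a stationary covariance function if it is
positive semidefinite. -/
def IsStationaryCovariance (d : ℕ) (C : EuclideanSpace ℝ (Fin d) → ℝ) : Prop :=
  ∀ (n : ℕ) (x : Fin n → EuclideanSpace ℝ (Fin d)) (v : Fin n → ℝ),
    0 ≤ ∑ i, ∑ j, v i * v j * C (x i - x j)

/-- `φ : [0,∞) → ℝ` belongs to the class `Φ_d`. -/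
def MemPhi (d : ℕ) (φ : ℝ → ℝ) : Prop :=
  ContinuousOn φ (Set.Ici 0) ∧ IsStationaryCovariance d (fun h => φ ‖h‖)

/-- `f` is a `d`-radial spectral density of `φ`. -/
def IsRadialSpectralDensity (d : ℕ) (φ f : ℝ → ℝ) : Prop :=
  (∀ u : ℝ, 0 ≤ u → 0 ≤ f u) ∧
  MeasureTheory.Integrable (fun ω : EuclideanSpace ℝ (Fin d) => f ‖ω‖) ∧
  ∀ h : EuclideanSpace ℝ (Fin d),
    (φ ‖h‖ : ℂ) = ∫ ω : EuclideanSpace ℝ (Fin d),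
      Complex.exp (Complex.I * ((⟪h, ω⟫ : ℝ) : ℂ)) * ((f ‖ω‖ : ℝ) : ℂ)

/-- The quadratic form `hᵀ A h`. -/
def quadForm {d : ℕ} (A : Matrix (Fin d) (Fin d) ℝ) (h : EuclideanSpace ℝ (Fin d)) : ℝ :=
  ∑ i, ∑ j, h i * A i j * h j

open Real

section CosineTransform

variable {E : Type*} [NormedAddCommGroup E] [InnerProductSpace ℝ E]

theorem sum_sum_mul_cos_inner_sub_nonneg {ι : Type*} [Fintype ι] (x : ι → E) (v : ι → ℝ)
    (ξ : E) : 0 ≤ ∑ i, ∑ j, v i * v j * cos ⟪x i - x j, ξ⟫ := by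
  have hsq : ∑ i, ∑ j, v i * v j * cos ⟪x i - x j, ξ⟫ =
      (∑ i, v i * cos ⟪x i, ξ⟫) ^ 2 + (∑ i, v i * sin ⟪x i, ξ⟫) ^ 2 := by
    simp_rw [inner_sub_left, cos_sub, sq, Finset.sum_mul_sum, ← Finset.sum_add_distrib]
    exact Finset.sum_congr rfl fun i _ => Finset.sum_congr rfl fun j _ => by ring
  rw [hsq]
  positivity

variable [MeasurableSpace E] [OpensMeasurableSpace E] {μ : Measure E} {g : E → ℝ}

theorem MeasureTheory.Integrable.cos_inner_mul (hg : Integrable g μ) (h : E) :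
    Integrable (fun ξ => cos ⟪h, ξ⟫ * g ξ) μ :=
  hg.bdd_mul (continuous_cos.comp (continuous_const.inner continuous_id)).aestronglyMeasurable
    (.of_forall fun ξ => by simpa using abs_cos_le_one ⟪h, ξ⟫)

theorem sum_sum_mul_integral_cos_inner_sub_nonneg {ι : Type*} [Fintype ι]
    (hg : Integrable g μ) (hg0 : 0 ≤ᵐ[μ] g) (x : ι → E) (v : ι → ℝ) :
    0 ≤ ∑ i, ∑ j, v i * v j * ∫ ξ, cos ⟪x i - x j, ξ⟫ * g ξ ∂μ := by
  have hint : ∀ i j, Integrable (fun ξ => v i * v j * (cos ⟪x i - x j, ξ⟫ * g ξ)) μ :=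
    fun i j => (hg.cos_inner_mul _).const_mul _
  calc 0 ≤ ∫ ξ, (∑ i, ∑ j, v i * v j * cos ⟪x i - x j, ξ⟫) * g ξ ∂μ :=
        integral_nonneg_of_ae <| hg0.mono fun ξ hξ =>
          mul_nonneg (sum_sum_mul_cos_inner_sub_nonneg x v ξ) hξ
    _ = ∫ ξ, ∑ i, ∑ j, v i * v j * (cos ⟪x i - x j, ξ⟫ * g ξ) ∂μ := by
        simp_rw [Finset.sum_mul, mul_assoc]
    _ = _ := by
        rw [integral_finsetSum _ fun i _ => integrable_finsetSum _ fun j _ => hint i j]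
        simp_rw [integral_finsetSum _ fun j _ => hint _ j, integral_const_mul]

theorem integral_cos_inner_sub_add_integral_cos_inner_add (hg : Integrable g μ) (h η : E) :
    ∫ ξ, cos ⟪h - η, ξ⟫ * g ξ ∂μ + ∫ ξ, cos ⟪h + η, ξ⟫ * g ξ ∂μ =
      2 * ∫ ξ, cos ⟪h, ξ⟫ * (cos ⟪η, ξ⟫ * g ξ) ∂μ := by
  rw [← integral_add (hg.cos_inner_mul _) (hg.cos_inner_mul _), ← integral_const_mul]
  congr 1 with ξ
  simp only [inner_sub_left, inner_add_left, cos_sub, cos_add]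
  ring

end CosineTransform

theorem isStationaryCovariance_of_eq_integral_cos {d : ℕ}
    {μ : Measure (EuclideanSpace ℝ (Fin d))} {C g : EuclideanSpace ℝ (Fin d) → ℝ}
    (hg : Integrable g μ) (hg0 : 0 ≤ᵐ[μ] g) (hC : ∀ h, C h = ∫ ξ, cos ⟪h, ξ⟫ * g ξ ∂μ) :
    IsStationaryCovariance d C := by
  intro n x v
  simp_rw [hC]
  exact sum_sum_mul_integral_cos_inner_sub_nonneg hg hg0 x v

def radialRescale (d : ℕ) (c : ℝ) (f : ℝ → ℝ) (u : ℝ) : ℝ :=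
  (c ^ d)⁻¹ * f (c⁻¹ * u)

namespace IsRadialSpectralDensity

variable {d : ℕ} {φ f : ℝ → ℝ}

theorem eq_integral_cos (hf : IsRadialSpectralDensity d φ f) (h : EuclideanSpace ℝ (Fin d)) :
    φ ‖h‖ = ∫ ω, cos ⟪h, ω⟫ * f ‖ω‖ := by
  have hint : Integrable fun ω : EuclideanSpace ℝ (Fin d) =>
      Complex.exp (Complex.I * ((⟪h, ω⟫ : ℝ) : ℂ)) * ((f ‖ω‖ : ℝ) : ℂ) :=
    hf.2.1.ofReal.bdd_mul (c := 1) (by fun_prop)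
      (.of_forall fun ω => by simp [mul_comm Complex.I, Complex.norm_exp_ofReal_mul_I])
  calc φ ‖h‖ = (φ ‖h‖ : ℂ).re := (Complex.ofReal_re _).symm
    _ = ∫ ω, (Complex.exp (Complex.I * ((⟪h, ω⟫ : ℝ) : ℂ)) * ((f ‖ω‖ : ℝ) : ℂ)).re := by
        rw [hf.2.2 h]
        exact (integral_re hint).symm
    _ = _ := by
        simp_rw [mul_comm Complex.I, Complex.re_mul_ofReal, Complex.exp_ofReal_mul_I_re]

theorem comp_mul_left (hf : IsRadialSpectralDensity d φ f) {c : ℝ} (hc : 0 < c) :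
    IsRadialSpectralDensity d (fun t => φ (c * t)) (radialRescale d c f) := by
  have hnorm : ∀ ξ : EuclideanSpace ℝ (Fin d), ‖c⁻¹ • ξ‖ = c⁻¹ * ‖ξ‖ := fun ξ => by
    rw [norm_smul, Real.norm_of_nonneg (inv_nonneg.2 hc.le)]
  refine ⟨fun u hu => mul_nonneg (by positivity) (hf.1 _ (by positivity)), ?_, fun h => ?_⟩
  · simpa only [radialRescale, hnorm] using
      (hf.2.1.comp_smul (inv_ne_zero hc.ne')).const_mul (c ^ d)⁻¹
  · calc ((φ (c * ‖h‖) : ℝ) : ℂ)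
        = ∫ ω, Complex.exp (Complex.I * ((⟪c • h, ω⟫ : ℝ) : ℂ)) * ((f ‖ω‖ : ℝ) : ℂ) := by
          rw [← hf.2.2, norm_smul, Real.norm_of_nonneg hc.le]
      _ = (c ^ d)⁻¹ • ∫ ξ, Complex.exp (Complex.I * ((⟪c • h, c⁻¹ • ξ⟫ : ℝ) : ℂ)) *
            ((f ‖c⁻¹ • ξ‖ : ℝ) : ℂ) := by
          rw [Measure.integral_comp_inv_smul_of_nonneg volume
              (fun ω => Complex.exp (Complex.I * ((⟪c • h, ω⟫ : ℝ) : ℂ)) * ((f ‖ω‖ : ℝ) : ℂ)) hc.le,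
            finrank_euclideanSpace_fin,
            smul_smul, inv_mul_cancel₀ (pow_ne_zero d hc.ne'), one_smul]
      _ = _ := by
          rw [← integral_smul]
          congr 1 with ξ
          rw [real_inner_smul_left, real_inner_smul_right, mul_inv_cancel_left₀ hc.ne', hnorm,
            radialRescale, Complex.real_smul, Complex.ofReal_mul]
          ring

end IsRadialSpectralDensity

theorem mul_radialRescale_le_mul_radialRescale {d : ℕ} {f : ℝ → ℝ}
    (hf0 : ∀ u, 0 ≤ u → 0 ≤ f u) (hfmono : AntitoneOn f (Set.Ici 0)) {c₁ c₂ b₁ b₂ : ℝ}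
    (hc₂ : 0 < c₂) (hc : c₂ ≤ c₁) (hb₂ : 0 ≤ b₂) (hb : b₂ * (c₁ / c₂) ^ d ≤ b₁) {u : ℝ}
    (hu : 0 ≤ u) :
    b₂ * radialRescale d c₂ f u ≤ b₁ * radialRescale d c₁ f u := by
  have hc₁ : 0 < c₁ := hc₂.trans_le hc
  have hf_le : f (c₂⁻¹ * u) ≤ f (c₁⁻¹ * u) :=
    hfmono (Set.mem_Ici.2 (by positivity)) (Set.mem_Ici.2 (by positivity)) (by gcongr)
  calc b₂ * radialRescale d c₂ f u ≤ b₂ * ((c₂ ^ d)⁻¹ * f (c₁⁻¹ * u)) := by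
        unfold radialRescale
        gcongr
    _ = b₂ * (c₁ / c₂) ^ d * radialRescale d c₁ f u := by
        unfold radialRescale
        rw [div_pow]
        field_simp
    _ ≤ b₁ * radialRescale d c₁ f u :=
        mul_le_mul_of_nonneg_right hb (mul_nonneg (by positivity) (hf0 _ (by positivity)))

theorem statement_3_general (d : ℕ) (φ f : ℝ → ℝ)
    (hf : IsRadialSpectralDensity d φ f)
    (hfmono : AntitoneOn f (Set.Ici 0))
    (a₁ a₂ b₁ b₂ : ℝ) (ha₂ : 0 < a₂) (ha : a₂ ≤ a₁) (hb₂ : 0 ≤ b₂)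
    (hcond : b₂ * (a₁ / a₂) ^ ((d : ℝ) / 2) ≤ b₁)
    (η : EuclideanSpace ℝ (Fin d)) :
    IsStationaryCovariance d
      (fun h => b₁ * φ (Real.sqrt a₁ * ‖h‖) -
        b₂ / 2 * (φ (Real.sqrt a₂ * ‖h - η‖) + φ (Real.sqrt a₂ * ‖h + η‖))) := by
  have hc₂ : 0 < √a₂ := Real.sqrt_pos.2 ha₂
  have hc₁ : 0 < √a₁ := Real.sqrt_pos.2 (ha₂.trans_le ha)
  have hspec₁ := hf.comp_mul_left hc₁
  have hspec₂ := hf.comp_mul_left hc₂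
  have hb : b₂ * (√a₁ / √a₂) ^ d ≤ b₁ := by
    rwa [Real.rpow_div_two_eq_sqrt _ (div_nonneg (ha₂.le.trans ha) ha₂.le),
      Real.sqrt_div' _ ha₂.le, Real.rpow_natCast] at hcond
  have hint₁ := hspec₁.2.1.const_mul b₁
  have hint₂ := (hspec₂.2.1.cos_inner_mul η).const_mul b₂
  refine isStationaryCovariance_of_eq_integral_cos (hint₁.sub hint₂)
    (.of_forall fun ξ => sub_nonneg.2 ?_) fun h => ?_
  · calc b₂ * (cos ⟪η, ξ⟫ * radialRescale d √a₂ f ‖ξ‖)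
        ≤ b₂ * radialRescale d √a₂ f ‖ξ‖ := by
          gcongr
          exact mul_le_of_le_one_left (hspec₂.1 _ (norm_nonneg ξ)) (cos_le_one _)
      _ ≤ b₁ * radialRescale d √a₁ f ‖ξ‖ :=
          mul_radialRescale_le_mul_radialRescale hf.1 hfmono hc₂ (Real.sqrt_le_sqrt ha) hb₂ hb
            (norm_nonneg ξ)
  · rw [show φ (√a₁ * ‖h‖) = _ from hspec₁.eq_integral_cos h,
      show φ (√a₂ * ‖h - η‖) = _ from hspec₂.eq_integral_cos (h - η),
      show φ (√a₂ * ‖h + η‖) = _ from hspec₂.eq_integral_cos (h + η),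
      integral_cos_inner_sub_add_integral_cos_inner_add hspec₂.2.1]
    simp only [Pi.sub_apply, mul_sub, mul_left_comm _ b₁, mul_left_comm _ b₂]
    rw [integral_sub ((hspec₁.2.1.cos_inner_mul h).const_mul b₁)
      (((hspec₂.2.1.cos_inner_mul η).cos_inner_mul h).const_mul b₂), integral_const_mul,
      integral_const_mul]
    ring

theorem statement_3 (d : ℕ) (hd : 1 ≤ d) (φ f : ℝ → ℝ)
    (hφ : MemPhi d φ) (hf : IsRadialSpectralDensity d φ f)
    (hfmono : AntitoneOn f (Set.Ici 0))
    (a₁ a₂ b₁ b₂ : ℝ) (ha₂ : 0 < a₂) (ha : a₂ ≤ a₁) (hb₁ : 0 ≤ b₁) (hb₂ : 0 ≤ b₂)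
    (hcond : b₂ * (a₁ / a₂) ^ ((d : ℝ) / 2) ≤ b₁)
    (η : EuclideanSpace ℝ (Fin d)) :
    IsStationaryCovariance d
      (fun h => b₁ * φ (Real.sqrt a₁ * ‖h‖) -
        b₂ / 2 * (φ (Real.sqrt a₂ * ‖h - η‖) + φ (Real.sqrt a₂ * ‖h + η‖))) :=
  statement_3_general d φ f hf hfmono a₁ a₂ b₁ b₂ ha₂ ha hb₂ hcond η
end
end

section
/- Let d ≥ 1, let φ₁, φ₂ ∈ Φ_d, and assume that the map h ↦ φ₂(‖h‖) is twice continuously differentiable on ℝ^d. Let u be a unit vector in ℝ^d, and let a₁, a₂ > 0 and b₁, b₂ ≥ 0 be constants. Then the function T : ℝ^d → ℝ defined by T(h) = b₁ φ₁(√a₁ ‖h‖) − b₂ [ cos²θ(h,u) · φ₂''(√a₂ ‖h‖) + sin²θ(h,u) · φ₂'(√a₂ ‖h‖)/(√a₂ ‖h‖) ] for h ≠ 0, and T(0) = b₁ φ₁(0) − b₂ φ₂''(0), is a stationary covariance function on ℝ^d. -/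
open MeasureTheory
open scoped BigOperators RealInnerProductSpace

noncomputable section

/-!
Write `C₂ h = φ₂ (√a₂ ‖h‖)`. For `h ≠ 0` the bracket in `T h`, multiplied by `a₂`, is the second
derivative of `C₂` at `h` in the direction `u` (chain rule through `s ↦ ‖h + s u‖`), and at
`h = 0` the two sides agree by continuity of `φ₂''`. Hence `T = b₁ C₁ - (b₂ / a₂) ∂ᵤ² C₂`.
The second directional derivative is the limit of the symmetric second differences
`(2 C₂ h - C₂ (h + ε u) - C₂ (h - ε u)) / ε²`, each of which is positive semidefinite: its
quadratic form on points `xᵢ` with weights `vᵢ` is the quadratic form of `C₂` on the doubled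
family `xᵢ, xᵢ + ε u` with weights `vᵢ, -vᵢ`. Positive semidefiniteness survives nonnegative
combinations and pointwise limits.
-/

open Filter Topology

namespace IsStationaryCovariance

variable {d : ℕ} {C C' : EuclideanSpace ℝ (Fin d) → ℝ}

lemma add (hC : IsStationaryCovariance d C) (hC' : IsStationaryCovariance d C') :
    IsStationaryCovariance d (fun h => C h + C' h) := by
  intro n x v
  simpa only [mul_add, Finset.sum_add_distrib] using add_nonneg (hC n x v) (hC' n x v)

lemma const_mul (hC : IsStationaryCovariance d C) {c : ℝ} (hc : 0 ≤ c) :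
    IsStationaryCovariance d (fun h => c * C h) := by
  intro n x v
  have : ∑ i, ∑ j, v i * v j * (c * C (x i - x j)) =
      c * ∑ i, ∑ j, v i * v j * C (x i - x j) := by
    simp only [Finset.mul_sum]
    congr! 2
    ring
  rw [this]
  exact mul_nonneg hc (hC n x v)

lemma comp_smul (hC : IsStationaryCovariance d C) (c : ℝ) :
    IsStationaryCovariance d (fun h => C (c • h)) := by
  intro n x v
  simpa only [smul_sub] using hC n (fun i => c • x i) v

lemma comp_const_mul_norm {φ : ℝ → ℝ} (hφ : IsStationaryCovariance d fun h => φ ‖h‖) {c : ℝ}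
    (hc : 0 ≤ c) : IsStationaryCovariance d fun h => φ (c * ‖h‖) := by
  simpa only [norm_smul_of_nonneg hc] using hφ.comp_smul c

lemma two_mul_sub_sub (hC : IsStationaryCovariance d C) (w : EuclideanSpace ℝ (Fin d)) :
    IsStationaryCovariance d (fun h => 2 * C h - C (h + w) - C (h - w)) := by
  intro n x v
  have key := hC (n + n) (Fin.addCases x (fun i => x i + w)) (Fin.addCases v (fun i => -v i))
  simp only [Fin.sum_univ_add, Fin.addCases_left, Fin.addCases_right, ← Finset.sum_add_distrib]
    at key
  refine key.trans_eq (Finset.sum_congr rfl fun i _ => Finset.sum_congr rfl fun j _ => ?_)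
  rw [add_sub_add_right_eq_sub, ← sub_sub, add_sub_right_comm]
  ring

lemma of_tendsto {ι : Type*} {l : Filter ι} [l.NeBot] {F : ι → EuclideanSpace ℝ (Fin d) → ℝ}
    (hF : ∀ᶠ i in l, IsStationaryCovariance d (F i))
    (hlim : ∀ h, Tendsto (fun i => F i h) l (𝓝 (C h))) :
    IsStationaryCovariance d C := by
  intro n x v
  refine ge_of_tendsto ?_ (hF.mono fun i hi => hi n x v)
  exact tendsto_finsetSum _ fun i _ => tendsto_finsetSum _ fun j _ => (hlim _).const_mul _

end IsStationaryCovariance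

lemma tendsto_symmetric_second_difference {ψ : ℝ → ℝ} (hψ : Differentiable ℝ ψ)
    (hψ' : DifferentiableAt ℝ (deriv ψ) 0) :
    Tendsto (fun ε => (ψ ε + ψ (-ε) - 2 * ψ 0) / ε ^ 2) (𝓝[>] 0)
      (𝓝 (deriv (deriv ψ) 0)) := by
  have hslope : Tendsto (slope (deriv ψ) 0) (𝓝[>] 0) (𝓝 (deriv (deriv ψ) 0)) :=
    (hasDerivAt_iff_tendsto_slope.mp hψ'.hasDerivAt).mono_left
      (nhdsWithin_mono _ fun _ hε => ne_of_gt hε)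
  have hslope_neg : Tendsto (fun ε => slope (deriv ψ) 0 (-ε)) (𝓝[>] 0)
      (𝓝 (deriv (deriv ψ) 0)) := by
    refine (hasDerivAt_iff_tendsto_slope.mp hψ'.hasDerivAt).comp ?_
    refine tendsto_nhdsWithin_of_tendsto_nhds_of_eventually_within _ ?_ ?_
    · simpa using (tendsto_neg_nhdsGT (a := (0:ℝ))).mono_right nhdsWithin_le_nhds
    · filter_upwards [self_mem_nhdsWithin] with ε (hε : 0 < ε) using by simpa using hε.ne'
  refine HasDerivAt.lhopital_zero_nhdsGT (f' := fun ε => deriv ψ ε - deriv ψ (-ε))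
    (g' := fun ε => 2 * ε) (Eventually.of_forall fun ε => ?_)
    (Eventually.of_forall fun ε => by simpa using hasDerivAt_pow 2 ε) ?_ ?_ ?_ ?_
  · have hneg := (hψ (-ε)).hasDerivAt.comp ε (hasDerivAt_neg ε)
    simpa [sub_eq_add_neg] using ((hψ ε).hasDerivAt.add hneg).sub_const (2 * ψ 0)
  · filter_upwards [self_mem_nhdsWithin] with ε (hε : 0 < ε) using by positivity
  · have : Continuous fun ε => ψ ε + ψ (-ε) - 2 * ψ 0 := by
      have := hψ.continuous; fun_prop
    simpa [two_mul] using (this.tendsto 0).mono_left nhdsWithin_le_nhds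
  · simpa using ((continuous_pow 2).tendsto (0:ℝ)).mono_left nhdsWithin_le_nhds
  · -- `(ψ' ε - ψ' (-ε)) / 2ε` is the mean of the slopes of `ψ'` from `0` to `ε` and to `-ε`
    refine ((hslope.add hslope_neg).div_const 2).congr' ?_ |>.trans (by rw [add_self_div_two])
    filter_upwards [self_mem_nhdsWithin] with ε (hε : 0 < ε)
    rw [slope_def_field, slope_def_field, sub_zero, sub_zero, div_neg, ← sub_eq_add_neg]
    field_simp
    ring

lemma hasDerivAt_comp_const_mul_of_mem_Ioi {f f' : ℝ → ℝ} {c : ℝ} (hc : 0 < c)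
    (hf : ∀ t ∈ Set.Ioi (0 : ℝ), HasDerivAt f (f' t) t) :
    ∀ t ∈ Set.Ioi (0 : ℝ), HasDerivAt (fun t => f (c * t)) (c * f' (c * t)) t := fun t ht =>
  ((hf _ (mul_pos hc ht)).comp t ((hasDerivAt_id t).const_mul c)).congr_deriv (by simp [mul_comm])

lemma IsStationaryCovariance.neg_deriv_deriv_add_smul {d : ℕ}
    {C : EuclideanSpace ℝ (Fin d) → ℝ} (hC : IsStationaryCovariance d C)
    (hC_diff : ContDiff ℝ 2 C) (u : EuclideanSpace ℝ (Fin d)) :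
    IsStationaryCovariance d (fun h => -deriv (deriv fun s : ℝ => C (h + s • u)) 0) := by
  refine of_tendsto (l := 𝓝[>] (0 : ℝ))
    (F := fun ε h => (ε ^ 2)⁻¹ * (2 * C h - C (h + ε • u) - C (h - ε • u)))
    (Eventually.of_forall fun ε => (hC.two_mul_sub_sub (ε • u)).const_mul (by positivity))
    fun h => ?_
  have hψ : ContDiff ℝ 2 fun s : ℝ => C (h + s • u) := by fun_prop
  refine (tendsto_symmetric_second_difference (hψ.differentiable (by norm_num))
    (hψ.differentiable_deriv_two 0)).neg.congr fun ε => ?_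
  simp only [neg_smul, ← sub_eq_add_neg, zero_smul, add_zero]
  ring

section Radial

variable {E : Type*} [NormedAddCommGroup E] [InnerProductSpace ℝ E] {h u : E}
  {φ φ' φ'' : ℝ → ℝ}

lemma hasDerivAt_norm_add_smul (hu : ‖u‖ = 1) {s : ℝ} (hs : h + s • u ≠ 0) :
    HasDerivAt (fun s : ℝ => ‖h + s • u‖) ((⟪h, u⟫ + s) / ‖h + s • u‖) s := by
  have hline : HasDerivAt (fun s : ℝ => h + s • u) u s :=
    ((hasDerivAt_id s).smul_const u).const_add h |>.congr_deriv (one_smul ℝ u)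
  have := hline.norm_sq.sqrt (by positivity)
  simp only [Real.sqrt_sq (norm_nonneg _)] at this
  convert this using 1
  rw [inner_add_left, real_inner_smul_left, real_inner_self_eq_norm_sq, hu]
  field_simp

lemma hasDerivAt_comp_norm_add_smul (hu : ‖u‖ = 1)
    (hφ : ∀ t ∈ Set.Ioi (0 : ℝ), HasDerivAt φ (φ' t) t) {s : ℝ} (hs : h + s • u ≠ 0) :
    HasDerivAt (fun s : ℝ => φ ‖h + s • u‖)
      (φ' ‖h + s • u‖ * ((⟪h, u⟫ + s) / ‖h + s • u‖)) s :=
  (hφ _ (norm_pos_iff.mpr hs)).comp s (hasDerivAt_norm_add_smul hu hs)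

lemma deriv_deriv_comp_norm_add_smul (hu : ‖u‖ = 1) (hh : h ≠ 0)
    (hφ : ∀ t ∈ Set.Ioi (0 : ℝ), HasDerivAt φ (φ' t) t)
    (hφ' : ∀ t ∈ Set.Ioi (0 : ℝ), HasDerivAt φ' (φ'' t) t) :
    deriv (deriv fun s : ℝ => φ ‖h + s • u‖) 0 =
      (⟪h, u⟫ / ‖h‖) ^ 2 * φ'' ‖h‖ + (1 - (⟪h, u⟫ / ‖h‖) ^ 2) * (φ' ‖h‖ / ‖h‖) := by
  have hne : ∀ᶠ s in 𝓝 (0 : ℝ), h + s • u ≠ 0 :=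
    (Continuous.tendsto (by fun_prop) 0).eventually_ne (by simpa using hh)
  have hderiv : deriv (fun s : ℝ => φ ‖h + s • u‖) =ᶠ[𝓝 0]
      fun s => φ' ‖h + s • u‖ * ((⟪h, u⟫ + s) / ‖h + s • u‖) :=
    hne.mono fun s hs => (hasDerivAt_comp_norm_add_smul hu hφ hs).deriv
  have h0 : h + (0 : ℝ) • u ≠ 0 := by simpa using hh
  have hnorm := hasDerivAt_norm_add_smul hu h0
  have hnorm_pos : 0 < ‖h + (0 : ℝ) • u‖ := norm_pos_iff.mpr h0
  have hφ'_comp : HasDerivAt (fun s : ℝ => φ' ‖h + s • u‖) _ 0 :=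
    (hφ' _ hnorm_pos).comp 0 hnorm
  have hquot := ((hasDerivAt_id' (0 : ℝ)).const_add ⟪h, u⟫).fun_div hnorm hnorm_pos.ne'
  rw [hderiv.deriv_eq, (hφ'_comp.fun_mul hquot).deriv]
  simp only [zero_smul, add_zero]
  field_simp

lemma deriv_deriv_comp_abs_zero (hψ : ContDiff ℝ 2 fun s : ℝ => φ |s|)
    (hφ : ∀ t ∈ Set.Ioi (0 : ℝ), HasDerivAt φ (φ' t) t)
    (hφ' : ∀ t ∈ Set.Ioi (0 : ℝ), HasDerivAt φ' (φ'' t) t)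
    (hφ'' : ContinuousWithinAt φ'' (Set.Ioi 0) 0) :
    deriv (deriv fun s : ℝ => φ |s|) 0 = φ'' 0 := by
  have hderiv : ∀ t ∈ Set.Ioi (0 : ℝ), deriv (fun s : ℝ => φ |s|) t = φ' t := by
    intro t ht
    refine ((hφ t ht).congr_of_eventuallyEq ?_).deriv
    filter_upwards [eventually_gt_nhds ht] with s hs
    rw [abs_of_pos hs]
  have hderiv2 : Set.EqOn (deriv (deriv fun s : ℝ => φ |s|)) φ'' (Set.Ioi 0) := fun t ht => by
    have : deriv (fun s : ℝ => φ |s|) =ᶠ[𝓝 t] φ' := (eventually_gt_nhds ht).mono hderiv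
    rw [this.deriv_eq, (hφ' t ht).deriv]
  have hcont : Continuous (deriv (deriv fun s : ℝ => φ |s|)) :=
    (ContDiff.deriv' (n := 1) hψ).continuous_deriv le_rfl
  exact tendsto_nhds_unique ((hcont.tendsto 0).mono_left nhdsWithin_le_nhds)
    (hφ''.tendsto.congr' (eventuallyEq_nhdsWithin_of_eqOn hderiv2).symm)

lemma ContDiff.comp_abs_of_comp_norm {n : WithTop ℕ∞} (hu : ‖u‖ = 1)
    (hφ : ContDiff ℝ n fun h : E => φ ‖h‖) : ContDiff ℝ n fun s : ℝ => φ |s| := by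
  have : (fun s : ℝ => φ |s|) = (fun h => φ ‖h‖) ∘ fun s : ℝ => s • u := by
    funext s
    simp [norm_smul, hu]
  exact this ▸ hφ.comp (by fun_prop)

lemma ContDiff.comp_const_mul_norm {n : WithTop ℕ∞} (hφ : ContDiff ℝ n fun h : E => φ ‖h‖)
    {c : ℝ} (hc : 0 ≤ c) : ContDiff ℝ n fun h : E => φ (c * ‖h‖) := by
  simpa only [Function.comp_def, norm_smul_of_nonneg hc] using hφ.comp (contDiff_const_smul c)

end Radial

theorem statement_4_general (d : ℕ) (φ₁ φ₂ φ₂' φ₂'' : ℝ → ℝ)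
    (hφ₁ : MemPhi d φ₁) (hφ₂ : MemPhi d φ₂)
    (hsmooth : ContDiff ℝ 2 (fun h : EuclideanSpace ℝ (Fin d) => φ₂ ‖h‖))
    (hderiv1 : ∀ t ∈ Set.Ioi (0 : ℝ), HasDerivAt φ₂ (φ₂' t) t)
    (hderiv2 : ∀ t ∈ Set.Ioi (0 : ℝ), HasDerivAt φ₂' (φ₂'' t) t)
    (hcont2 : ContinuousOn φ₂'' (Set.Ici 0))
    (u : EuclideanSpace ℝ (Fin d)) (hu : ‖u‖ = 1)
    (a₁ a₂ b₁ b₂ : ℝ) (ha₂ : 0 < a₂) (hb₁ : 0 ≤ b₁) (hb₂ : 0 ≤ b₂)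
    (T : EuclideanSpace ℝ (Fin d) → ℝ)
    (hT0 : T 0 = b₁ * φ₁ 0 - b₂ * φ₂'' 0)
    (hT : ∀ h : EuclideanSpace ℝ (Fin d), h ≠ 0 →
      T h = b₁ * φ₁ (Real.sqrt a₁ * ‖h‖) -
        b₂ * (((⟪h, u⟫ : ℝ) / ‖h‖) ^ 2 * φ₂'' (Real.sqrt a₂ * ‖h‖) +
          (1 - ((⟪h, u⟫ : ℝ) / ‖h‖) ^ 2) *
            (φ₂' (Real.sqrt a₂ * ‖h‖) / (Real.sqrt a₂ * ‖h‖)))) :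
    IsStationaryCovariance d T := by
  set c := Real.sqrt a₂
  have hc : 0 < c := Real.sqrt_pos.mpr ha₂
  have hcc : c * c = a₂ := Real.mul_self_sqrt ha₂.le
  have hφ := hasDerivAt_comp_const_mul_of_mem_Ioi hc hderiv1
  have hφ' : ∀ t ∈ Set.Ioi (0 : ℝ),
      HasDerivAt (fun t => c * φ₂' (c * t)) (c * (c * φ₂'' (c * t))) t := fun t ht =>
    (hasDerivAt_comp_const_mul_of_mem_Ioi hc hderiv2 t ht).const_mul c
  have hφ'' : ContinuousWithinAt (fun t => c * (c * φ₂'' (c * t))) (Set.Ioi 0) 0 := by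
    refine continuousWithinAt_const.mul (continuousWithinAt_const.mul
      ((hcont2 0 Set.self_mem_Ici).comp_of_eq (by fun_prop) (fun t ht => ?_) (mul_zero c)))
    exact (mul_pos hc ht).le
  have hC₂ := hsmooth.comp_const_mul_norm hc.le
  have hT_eq : T = fun h => b₁ * φ₁ (Real.sqrt a₁ * ‖h‖) +
      b₂ / a₂ * -deriv (deriv fun s : ℝ => φ₂ (c * ‖h + s • u‖)) 0 := by
    funext h
    rcases eq_or_ne h 0 with rfl | hh
    · have hψ₀ := ContDiff.comp_abs_of_comp_norm (φ := fun t => φ₂ (c * t)) hu hC₂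
      simp only [zero_add, norm_smul, hu, mul_one, Real.norm_eq_abs, norm_zero, mul_zero]
      rw [hT0, deriv_deriv_comp_abs_zero hψ₀ hφ hφ' hφ'', mul_zero, ← hcc]
      field_simp
      ring
    · rw [hT h hh, deriv_deriv_comp_norm_add_smul hu hh hφ hφ', ← hcc]
      field_simp
      ring
  rw [hT_eq]
  exact ((hφ₁.2.comp_const_mul_norm (Real.sqrt_nonneg a₁)).const_mul hb₁).add
    ((hφ₂.2.comp_const_mul_norm hc.le).neg_deriv_deriv_add_smul hC₂ u |>.const_mul
      (div_nonneg hb₂ ha₂.le))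

theorem statement_4 (d : ℕ) (hd : 1 ≤ d) (φ₁ φ₂ φ₂' φ₂'' : ℝ → ℝ)
    (hφ₁ : MemPhi d φ₁) (hφ₂ : MemPhi d φ₂)
    (hsmooth : ContDiff ℝ 2 (fun h : EuclideanSpace ℝ (Fin d) => φ₂ ‖h‖))
    (hderiv1 : ∀ t ∈ Set.Ioi (0 : ℝ), HasDerivAt φ₂ (φ₂' t) t)
    (hderiv2 : ∀ t ∈ Set.Ioi (0 : ℝ), HasDerivAt φ₂' (φ₂'' t) t)
    (hcont1 : ContinuousOn φ₂' (Set.Ici 0)) (hcont2 : ContinuousOn φ₂'' (Set.Ici 0))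
    (u : EuclideanSpace ℝ (Fin d)) (hu : ‖u‖ = 1)
    (a₁ a₂ b₁ b₂ : ℝ) (ha₁ : 0 < a₁) (ha₂ : 0 < a₂) (hb₁ : 0 ≤ b₁) (hb₂ : 0 ≤ b₂)
    (T : EuclideanSpace ℝ (Fin d) → ℝ)
    (hT0 : T 0 = b₁ * φ₁ 0 - b₂ * φ₂'' 0)
    (hT : ∀ h : EuclideanSpace ℝ (Fin d), h ≠ 0 →
      T h = b₁ * φ₁ (Real.sqrt a₁ * ‖h‖) -
        b₂ * (((⟪h, u⟫ : ℝ) / ‖h‖) ^ 2 * φ₂'' (Real.sqrt a₂ * ‖h‖) +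
          (1 - ((⟪h, u⟫ : ℝ) / ‖h‖) ^ 2) *
            (φ₂' (Real.sqrt a₂ * ‖h‖) / (Real.sqrt a₂ * ‖h‖)))) :
    IsStationaryCovariance d T :=
  statement_4_general d φ₁ φ₂ φ₂' φ₂'' hφ₁ hφ₂ hsmooth hderiv1 hderiv2 hcont2 u hu a₁ a₂ b₁ b₂ ha₂
    hb₁ hb₂ T hT0 hT
end
end

section
/- For every positive integer d and every δ > 0, the function C : ℝ^d → ℝ defined by C(h) = (1 + ‖h‖²)^{−δ} is a continuous stationary covariance function on ℝ^d; that is, the Cauchy function C_δ(t) = (1 + t²)^{−δ} belongs to the class Φ_d for every d ≥ 1. -/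
open MeasureTheory
open scoped BigOperators RealInnerProductSpace

noncomputable section

/-! The inner product `⟪x, y⟫` is a positive semidefinite kernel, hence so are its powers (Schur
product theorem) and, summing the exponential series, `exp (2t⟪x, y⟫)` for `t ≥ 0`. Multiplying by
`exp (-t‖x‖²) exp (-t‖y‖²)` gives the Gaussian kernel `exp (-t‖x - y‖²)`. Finally
`(1 + s)^(-δ) = Γ(δ)⁻¹ ∫₀^∞ t^(δ-1) e^(-t) e^(-ts) dt` writes the Cauchy kernel as a mixture of
Gaussian kernels with nonnegative weights. -/

theorem integrableOn_rpow_mul_exp_neg_mul {a r : ℝ} (ha : 0 < a) (hr : 0 < r) :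
    IntegrableOn (fun t : ℝ => t ^ (a - 1) * Real.exp (-(r * t))) (Set.Ioi 0) := by
  simpa [Real.rpow_one, neg_mul] using
    integrableOn_rpow_mul_exp_neg_mul_rpow (s := a - 1) (by linarith) one_pos hr

theorem rpow_neg_eq_inv_Gamma_mul_integral {a r : ℝ} (ha : 0 < a) (hr : 0 < r) :
    r ^ (-a) = (Real.Gamma a)⁻¹ * ∫ t in Set.Ioi 0, t ^ (a - 1) * Real.exp (-(r * t)) := by
  rw [Real.integral_rpow_mul_exp_neg_mul_Ioi ha hr, one_div, Real.inv_rpow hr.le,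
    ← Real.rpow_neg hr.le, mul_comm (r ^ (-a)), inv_mul_cancel_left₀ (Real.Gamma_pos_of_pos ha).ne']

def IsPosSemidefKernel {X : Type*} (K : X → X → ℝ) : Prop :=
  ∀ (n : ℕ) (x : Fin n → X) (v : Fin n → ℝ), 0 ≤ ∑ i, ∑ j, v i * v j * K (x i) (x j)

namespace IsPosSemidefKernel

variable {X : Type*}

theorem of_posSemidef {K : X → X → ℝ}
    (hK : ∀ (n : ℕ) (x : Fin n → X), (Matrix.of fun i j => K (x i) (x j)).PosSemidef) :
    IsPosSemidefKernel K := by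
  intro n x v
  have := (hK n x).dotProduct_mulVec_nonneg v
  simpa [dotProduct, Matrix.mulVec, Finset.mul_sum, mul_comm, mul_left_comm] using this

theorem inner_pow {E : Type*} [NormedAddCommGroup E] [InnerProductSpace ℝ E] (k : ℕ) :
    IsPosSemidefKernel fun x y : E => ⟪x, y⟫ ^ k := by
  refine of_posSemidef fun n x => ?_
  induction k with
  | zero => simpa [Matrix.gram] using Matrix.posSemidef_gram ℝ fun _ : Fin n => (1 : ℝ)
  | succ k ih =>
    have hpow : (Matrix.of fun i j => ⟪x i, x j⟫ ^ (k + 1))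
        = (Matrix.of fun i j => ⟪x i, x j⟫ ^ k).hadamard (Matrix.gram ℝ x) := by
      ext i j
      simp [Matrix.gram, pow_succ]
    rw [hpow]
    exact ih.hadamard (Matrix.posSemidef_gram ℝ x)

theorem const_mul {K : X → X → ℝ} (hK : IsPosSemidefKernel K) {c : ℝ} (hc : 0 ≤ c) :
    IsPosSemidefKernel fun x y => c * K x y := by
  intro n x v
  have : ∑ i, ∑ j, v i * v j * (c * K (x i) (x j)) = c * ∑ i, ∑ j, v i * v j * K (x i) (x j) := by
    simp only [Finset.mul_sum]
    exact Finset.sum_congr rfl fun i _ => Finset.sum_congr rfl fun j _ => by ring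
  rw [this]
  exact mul_nonneg hc (hK n x v)

theorem mul_left_right {K : X → X → ℝ} (hK : IsPosSemidefKernel K) (g : X → ℝ) :
    IsPosSemidefKernel fun x y => g x * K x y * g y := by
  intro n x v
  convert hK n x fun i => v i * g (x i) using 3
  ring

theorem of_hasSum {K : ℕ → X → X → ℝ} {L : X → X → ℝ} (hK : ∀ k, IsPosSemidefKernel (K k))
    (hL : ∀ x y, HasSum (fun k => K k x y) (L x y)) : IsPosSemidefKernel L := by
  intro n x v
  exact (hasSum_sum fun i _ => hasSum_sum fun j _ => (hL (x i) (x j)).mul_left (v i * v j)).nonneg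
    fun k => hK k n x v

theorem integral {T : Type*} [MeasurableSpace T] {μ : Measure T} {K : T → X → X → ℝ}
    (hK : ∀ᵐ t ∂μ, IsPosSemidefKernel (K t)) (hint : ∀ x y, Integrable (fun t => K t x y) μ) :
    IsPosSemidefKernel fun x y => ∫ t, K t x y ∂μ := by
  intro n x v
  have hterm : ∀ i j, Integrable (fun t => v i * v j * K t (x i) (x j)) μ :=
    fun i j => (hint (x i) (x j)).const_mul _
  have : ∑ i, ∑ j, v i * v j * ∫ t, K t (x i) (x j) ∂μ
      = ∫ t, ∑ i, ∑ j, v i * v j * K t (x i) (x j) ∂μ := by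
    rw [integral_finsetSum _ fun i _ => integrable_finsetSum _ fun j _ => hterm i j]
    refine Finset.sum_congr rfl fun i _ => ?_
    rw [integral_finsetSum _ fun j _ => hterm i j]
    simp_rw [integral_const_mul]
  rw [this]
  exact integral_nonneg_of_ae (hK.mono fun t ht => ht n x v)

variable {E : Type*} [NormedAddCommGroup E] [InnerProductSpace ℝ E]

theorem exp_mul_inner {c : ℝ} (hc : 0 ≤ c) :
    IsPosSemidefKernel fun x y : E => Real.exp (c * ⟪x, y⟫) := by
  refine of_hasSum (fun k => (inner_pow k).const_mul (by positivity : 0 ≤ c ^ k / k.factorial))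
    fun x y => ?_
  have h : HasSum (fun k : ℕ => (c * ⟪x, y⟫) ^ k / k.factorial) (Real.exp (c * ⟪x, y⟫)) := by
    rw [Real.exp_eq_exp_ℝ]
    exact NormedSpace.expSeries_div_hasSum_exp _
  convert h using 2 with k
  ring

theorem exp_neg_mul_norm_sub_sq {t : ℝ} (ht : 0 ≤ t) :
    IsPosSemidefKernel fun x y : E => Real.exp (-(t * ‖x - y‖ ^ 2)) := by
  have hsplit : (fun x y : E => Real.exp (-(t * ‖x - y‖ ^ 2))) = fun x y =>
      Real.exp (-(t * ‖x‖ ^ 2)) * Real.exp (2 * t * ⟪x, y⟫) * Real.exp (-(t * ‖y‖ ^ 2)) := by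
    funext x y
    rw [← Real.exp_add, ← Real.exp_add, norm_sub_sq_real]
    ring_nf
  rw [hsplit]
  exact (exp_mul_inner (by positivity)).mul_left_right _

theorem rpow_neg_one_add_norm_sub_sq {δ : ℝ} (hδ : 0 < δ) :
    IsPosSemidefKernel fun x y : E => (1 + ‖x - y‖ ^ 2) ^ (-δ) := by
  have hmix : IsPosSemidefKernel fun x y : E =>
      ∫ t in Set.Ioi 0, t ^ (δ - 1) * Real.exp (-((1 + ‖x - y‖ ^ 2) * t)) := by
    refine integral (ae_restrict_of_forall_mem measurableSet_Ioi fun t ht => ?_)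
      fun x y => integrableOn_rpow_mul_exp_neg_mul hδ (by positivity)
    have ht : (0 : ℝ) < t := ht
    have hsplit : (fun x y : E => t ^ (δ - 1) * Real.exp (-((1 + ‖x - y‖ ^ 2) * t)))
        = fun x y => t ^ (δ - 1) * Real.exp (-t) * Real.exp (-(t * ‖x - y‖ ^ 2)) := by
      funext x y
      rw [mul_assoc, ← Real.exp_add]
      ring_nf
    rw [hsplit]
    exact (exp_neg_mul_norm_sub_sq ht.le).const_mul (by positivity)
  have hcauchy : (fun x y : E => (1 + ‖x - y‖ ^ 2) ^ (-δ)) = fun x y => (Real.Gamma δ)⁻¹ *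
      ∫ t in Set.Ioi 0, t ^ (δ - 1) * Real.exp (-((1 + ‖x - y‖ ^ 2) * t)) := by
    funext x y
    exact rpow_neg_eq_inv_Gamma_mul_integral hδ (by positivity)
  rw [hcauchy]
  exact hmix.const_mul (inv_nonneg.2 (Real.Gamma_pos_of_pos hδ).le)

end IsPosSemidefKernel

theorem statement_16_general (d : ℕ) (δ : ℝ) (hδ : 0 < δ) :
    Continuous (fun h : EuclideanSpace ℝ (Fin d) => (1 + ‖h‖ ^ 2) ^ (-δ)) ∧
    IsStationaryCovariance d (fun h => (1 + ‖h‖ ^ 2) ^ (-δ)) :=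
  ⟨(continuous_const.add (continuous_norm.pow 2)).rpow_const fun h =>
      Or.inl (by positivity : (0 : ℝ) < 1 + ‖h‖ ^ 2).ne',
    IsPosSemidefKernel.rpow_neg_one_add_norm_sub_sq hδ⟩

theorem statement_16 (d : ℕ) (hd : 1 ≤ d) (δ : ℝ) (hδ : 0 < δ) :
    Continuous (fun h : EuclideanSpace ℝ (Fin d) => (1 + ‖h‖ ^ 2) ^ (-δ)) ∧
    IsStationaryCovariance d (fun h => (1 + ‖h‖ ^ 2) ^ (-δ)) :=
  statement_16_general d δ hδ
end
end
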